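/- In the random model, let δ := 1/(3n²mφ) and let B_∞(r,δ) := {r̃ ∈ ℝ^m : ‖r − r̃‖_∞ ≤ δ} denote the closed ℓ_∞-ball. Then with probability at least 1 − 1/n there exists a directed cycle C of G such that B_∞(r,δ) ⊆ P^C. -/

import Mathlib

open MeasureTheory

/-- The `k`-th edge of the closed walk determined by the list of vertices `c`
(from the `k`-th vertex to the next one, cyclically). -/
def cycleEdge {n : ℕ} (c : List (Fin n)) (k : Fin c.length) : Fin n × Fin n :=
  (c.get k, c.get ⟨(k.1 + 1) % c.length, Nat.mod_lt _ (Nat.lt_of_le_of_lt (Nat.zero_le _) k.isLt)⟩)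

/-- `C ⊆ E` is the edge set of a simple directed cycle of the graph `([n], E)`. -/
def IsCycle {n : ℕ} (E : Finset (Fin n × Fin n)) (C : Finset {e : Fin n × Fin n // e ∈ E}) :
    Prop :=
  ∃ (c : List (Fin n)) (h : ∀ k : Fin c.length, cycleEdge c k ∈ E),
    0 < c.length ∧ c.Nodup ∧
      C = Finset.image (fun k => (⟨cycleEdge c k, h k⟩ : {e : Fin n × Fin n // e ∈ E}))
            Finset.univ

/-- Mean weight of a set of edges. -/
noncomputable def meanWeight {n : ℕ} {E : Finset (Fin n × Fin n)}
    (r : {e : Fin n × Fin n // e ∈ E} → ℝ) (C : Finset {e : Fin n × Fin n // e ∈ E}) : ℝ :=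
  (∑ e ∈ C, r e) / C.card

/-- `C` is an optimal (minimum mean weight) cycle of the DMDP with weights `r`. -/
def IsOptCycle {n : ℕ} (E : Finset (Fin n × Fin n)) (r : {e : Fin n × Fin n // e ∈ E} → ℝ)
    (C : Finset {e : Fin n × Fin n // e ∈ E}) : Prop :=
  IsCycle E C ∧ ∀ C', IsCycle E C' → meanWeight r C ≤ meanWeight r C'

/-- `P^C`: the set of weight vectors for which `C` is the unique optimal cycle. -/
def Pcell {n : ℕ} (E : Finset (Fin n × Fin n)) (C : Finset {e : Fin n × Fin n // e ∈ E}) :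
    Set ({e : Fin n × Fin n // e ∈ E} → ℝ) :=
  {r | IsOptCycle E r C ∧ ∀ C', IsOptCycle E r C' → C' = C}

/-- `U := ∪_C P^C`. -/
def Ucell {n : ℕ} (E : Finset (Fin n × Fin n)) : Set ({e : Fin n × Fin n // e ∈ E} → ℝ) :=
  ⋃ C, Pcell E C

/-- The directed graph `([n], E)` is strongly connected. -/
def StronglyConnected {n : ℕ} (E : Finset (Fin n × Fin n)) : Prop :=
  ∀ i j : Fin n, Relation.ReflTransGen (fun a b => (a, b) ∈ E) i j

/-!
If some cycle `C` beats every other cycle by more than `2δ` in mean weight, then `C` stays the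
unique optimal cycle for all weights within `ℓ∞`-distance `δ`, since mean weights move by at most
`δ`. Otherwise some cycle `C'` comes within `2δ` of an optimal cycle `C`, and since no cycle is
properly contained in another there is an edge `e₀ ∈ C' \ C`. With all other weights fixed, the
values of `r e₀` for which this happens form a set of diameter at most `2δn`: raising `r e₀` by `t`
does not move `C` and raises the mean weight of `C'` by `t / |C'| ≥ t / n`. By independence and the
density bound this has probability at most `2δnφ`, and a union bound over the `m` edges gives
`2 / (3n) ≤ 1 / n`.
-/

namespace List

variable {α : Type*}

def cyclicGet (c : List α) (hc : 0 < c.length) (j : ℕ) : α :=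
  c.get ⟨j % c.length, Nat.mod_lt _ hc⟩

theorem cyclicGet_mod (c : List α) (hc : 0 < c.length) (j : ℕ) :
    c.cyclicGet hc (j % c.length) = c.cyclicGet hc j := by
  simp only [cyclicGet, Nat.mod_mod]

theorem cyclicGet_eq_iff_modEq {c : List α} (hnd : c.Nodup) (hc : 0 < c.length) {i j : ℕ} :
    c.cyclicGet hc i = c.cyclicGet hc j ↔ i ≡ j [MOD c.length] :=
  ⟨fun h => Fin.val_eq_of_eq (nodup_iff_injective_get.mp hnd h),
    fun h => by simp only [cyclicGet, show i % c.length = j % c.length from h]⟩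

end List

theorem Function.exists_mem_periodicPts {α : Type*} [Finite α] [Nonempty α] (f : α → α) :
    ∃ y, y ∈ periodicPts f := by
  obtain ⟨x⟩ := ‹Nonempty α›
  obtain ⟨a, b, hne, hab⟩ := Finite.exists_ne_map_eq_of_infinite fun k : ℕ => f^[k] x
  wlog hlt : a < b generalizing a b
  · exact this b a hne.symm hab.symm (lt_of_le_of_ne (not_lt.mp hlt) hne.symm)
  refine ⟨f^[a] x, mk_mem_periodicPts (Nat.sub_pos_of_lt hlt) ?_⟩
  rw [IsPeriodicPt, IsFixedPt, ← iterate_add_apply, Nat.sub_add_cancel hlt.le]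
  exact hab.symm

section Cycles

variable {n : ℕ} {E : Finset (Fin n × Fin n)}

theorem cycleEdge_eq (c : List (Fin n)) (k : Fin c.length) :
    cycleEdge c k = (c.cyclicGet k.pos k, c.cyclicGet k.pos (k + 1)) := by
  simp only [cycleEdge, List.cyclicGet, Nat.mod_eq_of_lt k.isLt]

theorem cycleEdge_mod (c : List (Fin n)) (hc : 0 < c.length) (j : ℕ) :
    cycleEdge c ⟨j % c.length, Nat.mod_lt _ hc⟩ = (c.cyclicGet hc j, c.cyclicGet hc (j + 1)) := by
  rw [cycleEdge_eq, ← List.cyclicGet_mod c hc (j % c.length + 1), Nat.add_mod, Nat.mod_mod,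
    ← Nat.add_mod, List.cyclicGet_mod, List.cyclicGet_mod]

theorem card_eq_length_of_isCycle {C : Finset {e : Fin n × Fin n // e ∈ E}} (c : List (Fin n))
    (h : ∀ k : Fin c.length, cycleEdge c k ∈ E) (hnd : c.Nodup)
    (hC : C = Finset.univ.image fun k => (⟨cycleEdge c k, h k⟩ : {e // e ∈ E})) :
    C.card = c.length := by
  rw [hC, Finset.card_image_of_injective, Finset.card_univ, Fintype.card_fin]
  exact fun k₁ k₂ hk => List.nodup_iff_injective_get.mp hnd (congrArg (·.1.1) hk)

theorem IsCycle.card_pos {C : Finset {e : Fin n × Fin n // e ∈ E}} (h : IsCycle E C) :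
    0 < C.card := by
  obtain ⟨c, hk, hlen, hnd, hC⟩ := h
  rwa [card_eq_length_of_isCycle c hk hnd hC]

theorem IsCycle.card_le {C : Finset {e : Fin n × Fin n // e ∈ E}} (h : IsCycle E C) :
    C.card ≤ n := by
  obtain ⟨c, hk, -, hnd, hC⟩ := h
  simpa [card_eq_length_of_isCycle c hk hnd hC] using hnd.length_le_card

theorem cyclicGet_eq_cyclicGet_add {c c' : List (Fin n)} (hnd : c.Nodup) (hc : 0 < c.length)
    (hc' : 0 < c'.length)
    (hsub : ∀ j : Fin c'.length, ∃ k : Fin c.length, cycleEdge c k = cycleEdge c' j) {k₀ : ℕ}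
    (h₀ : c'.cyclicGet hc' 0 = c.cyclicGet hc k₀) (j : ℕ) :
    c'.cyclicGet hc' j = c.cyclicGet hc (k₀ + j) := by
  induction j with
  | zero => exact h₀
  | succ j ih =>
    obtain ⟨k, hk⟩ := hsub ⟨j % c'.length, Nat.mod_lt _ hc'⟩
    rw [cycleEdge_eq, cycleEdge_mod _ hc'] at hk
    obtain ⟨hfst, hsnd⟩ := Prod.mk.inj hk
    have hmod : k.1 ≡ k₀ + j [MOD c.length] :=
      (List.cyclicGet_eq_iff_modEq hnd hc).mp (hfst.trans ih)
    rw [← hsnd, ← add_assoc]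
    exact (List.cyclicGet_eq_iff_modEq hnd hc).mpr (hmod.add_right 1)

theorem IsCycle.eq_of_subset {C C' : Finset {e : Fin n × Fin n // e ∈ E}} (h : IsCycle E C)
    (h' : IsCycle E C') (hsub : C' ⊆ C) : C' = C := by
  obtain ⟨c, hk, hc, hnd, rfl⟩ := h
  obtain ⟨c', hk', hc', hnd', rfl⟩ := h'
  have hedges : ∀ j : Fin c'.length, ∃ k : Fin c.length, cycleEdge c k = cycleEdge c' j := by
    intro j
    obtain ⟨k, -, hkj⟩ := Finset.mem_image.mp (hsub (Finset.mem_image_of_mem _ (Finset.mem_univ j)))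
    exact ⟨k, congrArg Subtype.val hkj⟩
  obtain ⟨k₀, hk₀⟩ := hedges ⟨0, hc'⟩
  have hstart : c'.cyclicGet hc' 0 = c.cyclicGet hc k₀ := by
    simpa [cycleEdge_eq] using (congrArg Prod.fst hk₀).symm
  have hround := cyclicGet_eq_cyclicGet_add hnd hc hc' hedges hstart
  -- going once around `c'` brings us back, so it goes around `c` a whole number of times
  have hdvd : c.length ∣ c'.length := by
    have h : c.cyclicGet hc (k₀ + 0) = c.cyclicGet hc (k₀ + c'.length) := by
      rw [← hround, ← hround, ← c'.cyclicGet_mod hc' c'.length, Nat.mod_self]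
    exact Nat.modEq_zero_iff_dvd.mp
      (Nat.ModEq.add_left_cancel' k₀ ((List.cyclicGet_eq_iff_modEq hnd hc).mp h)).symm
  refine Finset.eq_of_subset_of_card_le hsub ?_
  rw [card_eq_length_of_isCycle c hk hnd rfl, card_eq_length_of_isCycle c' hk' hnd' rfl]
  exact Nat.le_of_dvd hc' hdvd

theorem exists_isCycle_of_mem_periodicPts {g : Fin n → Fin n} (hg : ∀ i, (i, g i) ∈ E) {y : Fin n}
    (hy : y ∈ Function.periodicPts g) : ∃ C, IsCycle E C := by
  set c := (List.range (Function.minimalPeriod g y)).map fun k => g^[k] y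
  have hc : 0 < c.length := by
    simpa [c] using Function.minimalPeriod_pos_of_mem_periodicPts hy
  have hget : ∀ j, c.cyclicGet hc j = g^[j] y := fun j => by
    simp [List.cyclicGet, c, (Function.isPeriodicPt_minimalPeriod g y).iterate_mod_apply]
  have hedge : ∀ k : Fin c.length, cycleEdge c k ∈ E := fun k => by
    rw [cycleEdge_eq, hget, hget, Function.iterate_succ_apply']
    exact hg _
  refine ⟨_, c, hedge, hc, ?_, rfl⟩
  exact List.nodup_range.map_on fun i hi j hj hij =>
    Function.iterate_injOn_Iio_minimalPeriod (List.mem_range.mp hi) (List.mem_range.mp hj) hij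

theorem exists_isCycle (hn : 0 < n) (hout : ∀ i : Fin n, ∃ j : Fin n, (i, j) ∈ E) :
    ∃ C, IsCycle E C := by
  choose g hg using hout
  have : Nonempty (Fin n) := ⟨⟨0, hn⟩⟩
  obtain ⟨y, hy⟩ := Function.exists_mem_periodicPts g
  exact exists_isCycle_of_mem_periodicPts hg hy

end Cycles

section MeanWeight

variable {n : ℕ} {E : Finset (Fin n × Fin n)}

def HasOptGap (E : Finset (Fin n × Fin n)) (δ : ℝ) (r : {e : Fin n × Fin n // e ∈ E} → ℝ) :
    Prop :=
  ∃ C, IsCycle E C ∧ ∀ C', IsCycle E C' → C' ≠ C → meanWeight r C + 2 * δ < meanWeight r C'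

def nearTie (E : Finset (Fin n × Fin n)) (δ : ℝ) (e₀ : {e : Fin n × Fin n // e ∈ E}) :
    Set ({e : Fin n × Fin n // e ∈ E} → ℝ) :=
  {r | ∃ C C', IsOptCycle E r C ∧ IsCycle E C' ∧ e₀ ∉ C ∧ e₀ ∈ C' ∧
    meanWeight r C' ≤ meanWeight r C + 2 * δ}

theorem abs_meanWeight_sub_le {C : Finset {e : Fin n × Fin n // e ∈ E}} (hC : C.Nonempty)
    {r r' : {e : Fin n × Fin n // e ∈ E} → ℝ} {δ : ℝ} (hd : ∀ e, |r e - r' e| ≤ δ) :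
    |meanWeight r C - meanWeight r' C| ≤ δ := by
  have hcard : (0 : ℝ) < C.card := by exact_mod_cast hC.card_pos
  rw [meanWeight, meanWeight, div_sub_div_same, ← Finset.sum_sub_distrib, abs_div,
    abs_of_pos hcard, div_le_iff₀ hcard]
  calc |∑ e ∈ C, (r e - r' e)| ≤ ∑ e ∈ C, |r e - r' e| := Finset.abs_sum_le_sum_abs _ _
    _ ≤ ∑ _e ∈ C, δ := Finset.sum_le_sum fun e _ => hd e
    _ = δ * C.card := by rw [Finset.sum_const, nsmul_eq_mul, mul_comm]

theorem HasOptGap.exists_forall_mem_Pcell {δ : ℝ} {r : {e : Fin n × Fin n // e ∈ E} → ℝ}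
    (hr : HasOptGap E δ r) :
    ∃ C, IsCycle E C ∧ ∀ r', (∀ e, |r e - r' e| ≤ δ) → r' ∈ Pcell E C := by
  obtain ⟨C, hC, hgap⟩ := hr
  refine ⟨C, hC, fun r' hd => ?_⟩
  have hclose : ∀ D, IsCycle E D → |meanWeight r D - meanWeight r' D| ≤ δ :=
    fun D hD => abs_meanWeight_sub_le (Finset.card_pos.mp hD.card_pos) hd
  have hbeats : ∀ D, IsCycle E D → D ≠ C → meanWeight r' C < meanWeight r' D := by
    intro D hD hDC
    have := hgap D hD hDC
    have := abs_le.mp (hclose C hC)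
    have := abs_le.mp (hclose D hD)
    linarith
  refine ⟨⟨hC, fun D hD => ?_⟩, fun D hD => ?_⟩
  · rcases eq_or_ne D C with rfl | hDC
    · exact le_rfl
    · exact (hbeats D hD hDC).le
  · by_contra hDC
    exact (hD.2 C hC).not_gt (hbeats D hD.1 hDC)

theorem exists_isOptCycle (hn : 0 < n) (hout : ∀ i : Fin n, ∃ j : Fin n, (i, j) ∈ E)
    (r : {e : Fin n × Fin n // e ∈ E} → ℝ) : ∃ C, IsOptCycle E r C := by
  classical
  obtain ⟨C₀, hC₀⟩ := exists_isCycle hn hout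
  obtain ⟨C, hC, hmin⟩ := Finset.exists_min_image {C | IsCycle E C} (meanWeight r)
    ⟨C₀, by simpa using hC₀⟩
  exact ⟨C, by simpa using hC, fun D hD => hmin D (by simpa using hD)⟩

theorem exists_mem_nearTie_of_not_hasOptGap (hn : 0 < n)
    (hout : ∀ i : Fin n, ∃ j : Fin n, (i, j) ∈ E) {δ : ℝ} {r : {e : Fin n × Fin n // e ∈ E} → ℝ}
    (hr : ¬ HasOptGap E δ r) : ∃ e₀, r ∈ nearTie E δ e₀ := by
  obtain ⟨C, hC⟩ := exists_isOptCycle hn hout r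
  simp only [HasOptGap, not_exists, not_and, not_forall, not_lt] at hr
  obtain ⟨C', hC', hne, hle⟩ := hr C hC.1
  obtain ⟨e₀, he₀C', he₀C⟩ := Finset.not_subset.mp fun hsub => hne (hC.1.eq_of_subset hC' hsub)
  exact ⟨e₀, C, C', hC, hC', he₀C, he₀C', hle⟩

theorem meanWeight_update_of_notMem
    {D : Finset {e : Fin n × Fin n // e ∈ E}} {e₀ : {e : Fin n × Fin n // e ∈ E}} (he₀ : e₀ ∉ D)
    (r : {e : Fin n × Fin n // e ∈ E} → ℝ) (t : ℝ) :
    meanWeight (Function.update r e₀ t) D = meanWeight r D := by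
  rw [meanWeight, meanWeight, Finset.sum_update_of_notMem he₀]

theorem meanWeight_update_sub_meanWeight_update
    {D : Finset {e : Fin n × Fin n // e ∈ E}} {e₀ : {e : Fin n × Fin n // e ∈ E}} (he₀ : e₀ ∈ D)
    (r : {e : Fin n × Fin n // e ∈ E} → ℝ) (t₁ t₂ : ℝ) :
    meanWeight (Function.update r e₀ t₂) D - meanWeight (Function.update r e₀ t₁) D =
      (t₂ - t₁) / D.card := by
  rw [meanWeight, meanWeight, Finset.sum_update_of_mem he₀, Finset.sum_update_of_mem he₀]
  ring

theorem sub_le_of_update_mem_nearTie {δ : ℝ}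
    (hδ : 0 ≤ δ) {e₀ : {e : Fin n × Fin n // e ∈ E}} {x : {e : Fin n × Fin n // e ∈ E} → ℝ}
    {t₁ t₂ : ℝ} (h₁ : Function.update x e₀ t₁ ∈ nearTie E δ e₀)
    (h₂ : Function.update x e₀ t₂ ∈ nearTie E δ e₀) : t₂ - t₁ ≤ 2 * δ * n := by
  obtain ⟨C₁, -, hopt₁, -, he₀C₁, -, -⟩ := h₁
  obtain ⟨C₂, C₂', hopt₂, hC₂', -, he₀C₂', hnear⟩ := h₂
  have hstep : (t₂ - t₁) / C₂'.card ≤ 2 * δ := by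
    have := hopt₂.2 C₁ hopt₁.1
    have := hopt₁.2 C₂' hC₂'
    have := meanWeight_update_of_notMem he₀C₁ x t₁
    have := meanWeight_update_of_notMem he₀C₁ x t₂
    rw [← meanWeight_update_sub_meanWeight_update he₀C₂']
    linarith
  have hcard : (0 : ℝ) < C₂'.card := by exact_mod_cast hC₂'.card_pos
  have hcard_le : (C₂'.card : ℝ) ≤ n := by exact_mod_cast hC₂'.card_le
  rw [div_le_iff₀ hcard] at hstep
  nlinarith

end MeanWeight

@[fun_prop]
theorem measurable_meanWeight {n : ℕ} {E : Finset (Fin n × Fin n)}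
    (C : Finset {e : Fin n × Fin n // e ∈ E}) :
    Measurable fun r : {e : Fin n × Fin n // e ∈ E} → ℝ => meanWeight r C :=
  (Finset.measurable_sum C fun e _ => measurable_pi_apply e).div_const _

theorem measurableSet_nearTie {n : ℕ} {E : Finset (Fin n × Fin n)} (δ : ℝ)
    (e₀ : {e : Fin n × Fin n // e ∈ E}) : MeasurableSet (nearTie E δ e₀) := by
  simp only [nearTie, IsOptCycle]
  measurability

theorem withDensity_le_of_sub_le {f : ℝ → ENNReal} {φ L : ℝ} (hφ : 0 ≤ φ)
    (hf : ∀ y, f y ≤ ENNReal.ofReal φ) {S : Set ℝ} (hS : ∀ t₁ ∈ S, ∀ t₂ ∈ S, t₂ - t₁ ≤ L) :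
    volume.withDensity f S ≤ ENNReal.ofReal (φ * L) := by
  have hdiam : volume S ≤ ENNReal.ofReal L := by
    refine (Real.volume_le_diam S).trans (Metric.ediam_le fun t₁ h₁ t₂ h₂ => ?_)
    rw [edist_dist, Real.dist_eq]
    exact ENNReal.ofReal_le_ofReal (abs_sub_le_iff.mpr ⟨hS t₂ h₂ t₁ h₁, hS t₁ h₁ t₂ h₂⟩)
  calc volume.withDensity f S = ∫⁻ y in S, f y := withDensity_apply' f S
    _ ≤ ∫⁻ _ in S, ENNReal.ofReal φ := lintegral_mono hf
    _ = ENNReal.ofReal φ * volume S := setLIntegral_const S _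
    _ ≤ ENNReal.ofReal φ * ENNReal.ofReal L := by gcongr
    _ = ENNReal.ofReal (φ * L) := (ENNReal.ofReal_mul hφ).symm

theorem MeasureTheory.Measure.pi_le_of_forall_update_le {ι : Type*} [Fintype ι] [DecidableEq ι]
    {α : ι → Type*} [∀ i, MeasurableSpace (α i)] (ν : ∀ i, Measure (α i))
    [∀ i, IsProbabilityMeasure (ν i)] {B : Set (∀ i, α i)} (hB : MeasurableSet B) (i : ι)
    {c : ENNReal} (hc : ∀ x, ν i {t | Function.update x i t ∈ B} ≤ c) :
    Measure.pi ν B ≤ c := by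
  obtain ⟨x₀⟩ : Nonempty (∀ i, α i) := ⟨fun i => (nonempty_of_isProbabilityMeasure (ν i)).some⟩
  rw [← lintegral_indicator_one hB, lintegral_eq_lmarginal_univ x₀, Pi.one_def,
    lmarginal_erase' _ ((measurable_indicator_const_iff 1).mpr hB) (Finset.mem_univ i)]
  calc _ ≤ (∫⋯∫⁻_Finset.univ.erase i, fun _ => c ∂ν) x₀ :=
        lmarginal_mono
          (fun x => (lintegral_indicator_one (measurable_update x hB)).trans_le (hc x)) x₀
    _ = c := by simp [lmarginal]

open ProbabilityTheory

section RandomWeights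

variable {n : ℕ} {E : Finset (Fin n × Fin n)} {φ δ : ℝ} {Ω : Type*} [MeasurableSpace Ω]
  {μ : Measure Ω} [IsProbabilityMeasure μ] {X : Ω → {e : Fin n × Fin n // e ∈ E} → ℝ}
  {f : {e : Fin n × Fin n // e ∈ E} → ℝ → ENNReal}

theorem measure_preimage_nearTie_le (hφ : 0 ≤ φ) (hδ : 0 ≤ δ)
    (hmeas : ∀ e, Measurable fun ω => X ω e) (hindep : iIndepFun (fun e ω => X ω e) μ)
    (hdens : ∀ e, Measure.map (fun ω => X ω e) μ = volume.withDensity (f e))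
    (hbound : ∀ e y, f e y ≤ ENNReal.ofReal φ) (e₀ : {e : Fin n × Fin n // e ∈ E}) :
    μ (X ⁻¹' nearTie E δ e₀) ≤ ENNReal.ofReal (φ * (2 * δ * n)) := by
  have hlaw : μ.map X = Measure.pi fun e => volume.withDensity (f e) := by
    simpa only [hdens] using hindep.map_fun_eq_pi_map fun e => (hmeas e).aemeasurable
  have : ∀ e, IsProbabilityMeasure (volume.withDensity (f e)) := fun e =>
    hdens e ▸ Measure.isProbabilityMeasure_map (hmeas e).aemeasurable
  rw [← Measure.map_apply (measurable_pi_lambda X hmeas) (measurableSet_nearTie δ e₀), hlaw]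
  exact Measure.pi_le_of_forall_update_le _ (measurableSet_nearTie δ e₀) e₀ fun x =>
    withDensity_le_of_sub_le hφ (hbound e₀) fun _ h₁ _ h₂ => sub_le_of_update_mem_nearTie hδ h₁ h₂

theorem measure_not_hasOptGap_le (hn : 0 < n) (hout : ∀ i : Fin n, ∃ j : Fin n, (i, j) ∈ E)
    (hφ : 0 ≤ φ) (hδ : 0 ≤ δ)
    (hmeas : ∀ e, Measurable fun ω => X ω e) (hindep : iIndepFun (fun e ω => X ω e) μ)
    (hdens : ∀ e, Measure.map (fun ω => X ω e) μ = volume.withDensity (f e))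
    (hbound : ∀ e y, f e y ≤ ENNReal.ofReal φ) :
    μ {ω | ¬ HasOptGap E δ (X ω)} ≤ E.card * ENNReal.ofReal (φ * (2 * δ * n)) :=
  calc μ {ω | ¬ HasOptGap E δ (X ω)} ≤ μ (⋃ e₀, X ⁻¹' nearTie E δ e₀) :=
        measure_mono fun ω hω => Set.mem_iUnion.mpr (exists_mem_nearTie_of_not_hasOptGap hn hout hω)
    _ ≤ ∑ e₀, μ (X ⁻¹' nearTie E δ e₀) := measure_iUnion_fintype_le _ _
    _ ≤ ∑ _e₀ : {e : Fin n × Fin n // e ∈ E}, ENNReal.ofReal (φ * (2 * δ * n)) :=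
        Finset.sum_le_sum fun e₀ _ =>
          measure_preimage_nearTie_le hφ hδ hmeas hindep hdens hbound e₀
    _ = E.card * ENNReal.ofReal (φ * (2 * δ * n)) := by simp

end RandomWeights

open ProbabilityTheory in
theorem stmt4_general (n : ℕ) (hn : 0 < n) (E : Finset (Fin n × Fin n))
    (hout : ∀ i : Fin n, ∃ j : Fin n, (i, j) ∈ E)
    (φ : ℝ) (hφ : 0 < φ)
    (Ω : Type*) [MeasurableSpace Ω] (μ : Measure Ω) [IsProbabilityMeasure μ]
    (X : Ω → {e : Fin n × Fin n // e ∈ E} → ℝ)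
    (hmeas : ∀ e, Measurable fun ω => X ω e)
    (hindep : iIndepFun (fun e ω => X ω e) μ)
    (f : {e : Fin n × Fin n // e ∈ E} → ℝ → ENNReal)
    (hdens : ∀ e, Measure.map (fun ω => X ω e) μ = volume.withDensity (f e))
    (hbound : ∀ e y, f e y ≤ ENNReal.ofReal φ)
    (δ : ℝ) (hδ : δ = 1 / (3 * n ^ 2 * E.card * φ)) :
    μ {ω | ∃ C : Finset {e : Fin n × Fin n // e ∈ E}, IsCycle E C ∧
        ∀ r' : {e : Fin n × Fin n // e ∈ E} → ℝ,
          (∀ e, |X ω e - r' e| ≤ δ) → r' ∈ Pcell E C} ≥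
      1 - (n : ENNReal)⁻¹ := by
  have hδ₀ : 0 ≤ δ := by rw [hδ]; positivity
  have hcard : 0 < E.card := Finset.card_pos.mpr ⟨_, (hout ⟨0, hn⟩).choose_spec⟩
  have hsum : (E.card : ℝ) * (φ * (2 * δ * n)) ≤ (n : ℝ)⁻¹ := by
    rw [hδ]
    field_simp
    norm_num
  have hbad : μ {ω | ¬ HasOptGap E δ (X ω)} ≤ (n : ENNReal)⁻¹ := by
    refine (measure_not_hasOptGap_le hn hout hφ.le hδ₀ hmeas hindep hdens hbound).trans ?_
    rw [← ENNReal.ofReal_natCast, ← ENNReal.ofReal_mul (Nat.cast_nonneg _),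
      ← ENNReal.ofReal_natCast n, ← ENNReal.ofReal_inv_of_pos (by exact_mod_cast hn)]
    exact ENNReal.ofReal_le_ofReal hsum
  calc 1 - (n : ENNReal)⁻¹ ≤ 1 - μ {ω | ¬ HasOptGap E δ (X ω)} := tsub_le_tsub_left hbad 1
    _ ≤ μ {ω | HasOptGap E δ (X ω)} :=
        tsub_le_iff_right.mpr (by rw [← measure_univ (μ := μ)]; exact measure_univ_le_add_compl _)
    _ ≤ _ := measure_mono fun ω hω => hω.exists_forall_mem_Pcell

open ProbabilityTheory in
/-- In the random model, with `δ := 1/(3n²mφ)`, with probability at least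
`1 - 1/n` the closed `ℓ∞`-ball of radius `δ` around the random weights is contained in a
single cell `P^C`. -/
theorem stmt4 (n : ℕ) (hn : 0 < n) (E : Finset (Fin n × Fin n))
    (hsc : StronglyConnected E) (hout : ∀ i : Fin n, ∃ j : Fin n, (i, j) ∈ E)
    (φ : ℝ) (hφ : 0 < φ)
    (Ω : Type*) [MeasurableSpace Ω] (μ : Measure Ω) [IsProbabilityMeasure μ]
    (X : Ω → {e : Fin n × Fin n // e ∈ E} → ℝ)
    (hmeas : ∀ e, Measurable fun ω => X ω e)
    (hindep : iIndepFun (fun e ω => X ω e) μ)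
    (f : {e : Fin n × Fin n // e ∈ E} → ℝ → ENNReal)
    (hdens : ∀ e, Measure.map (fun ω => X ω e) μ = volume.withDensity (f e))
    (hbound : ∀ e y, f e y ≤ ENNReal.ofReal φ)
    (δ : ℝ) (hδ : δ = 1 / (3 * n ^ 2 * E.card * φ)) :
    μ {ω | ∃ C : Finset {e : Fin n × Fin n // e ∈ E}, IsCycle E C ∧
        ∀ r' : {e : Fin n × Fin n // e ∈ E} → ℝ,
          (∀ e, |X ω e - r' e| ≤ δ) → r' ∈ Pcell E C} ≥
      1 - (n : ENNReal)⁻¹ :=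
  stmt4_general n hn E hout φ hφ Ω μ X hmeas hindep f hdens hbound δ hδ
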